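/- arXiv:2103.00341 — 2 statements merged into one kernel-verified Lean document; each statement's English description precedes it below -/
import Mathlib

section
/- In the Mycielski graph M(G), for non-isolated vertices v_i, v_j of G the distances satisfy: d(u, v'_i) = 1, d(u, v_i) = 2, d(v'_i, v'_j) = 2 for i ≠ j, d(v_i, v'_i) = 2, d(v_i, v'_j) = min(3, d_G(v_i, v_j)) for i ≠ j, and d(v_i, v_j) = min(4, d_G(v_i, v_j)). -/
open SimpleGraph

abbrev MycVert (V : Type) : Type := V ⊕ V ⊕ Unit

def mycAdj {V : Type} (G : SimpleGraph V) : MycVert V → MycVert V → Prop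
  | Sum.inl a, Sum.inl b => G.Adj a b
  | Sum.inl a, Sum.inr (Sum.inl b) => G.Adj a b
  | Sum.inr (Sum.inl a), Sum.inl b => G.Adj a b
  | Sum.inr (Sum.inl _), Sum.inr (Sum.inr _) => True
  | Sum.inr (Sum.inr _), Sum.inr (Sum.inl _) => True
  | _, _ => False

/-- The Mycielski graph of `G`: `Sum.inl v` are original vertices, `Sum.inr (Sum.inl v)`
their copies, and `Sum.inr (Sum.inr ())` is the root. -/
def mycielski {V : Type} (G : SimpleGraph V) : SimpleGraph (MycVert V) where
  Adj := mycAdj G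
  symm := by
    constructor
    rintro (a | a | a) (b | b | b) h <;>
      first | exact G.adj_symm h | trivial | exact h.elim
  loopless := by
    constructor
    rintro (a | a | a) h <;> first | exact G.irrefl h | exact h

def IterMycVert (V : Type) : ℕ → Type
  | 0 => V
  | t + 1 => MycVert (IterMycVert V t)

/-- The `t`-th iterated Mycielski graph. -/
def iterMycielski {V : Type} (G : SimpleGraph V) : (t : ℕ) → SimpleGraph (IterMycVert V t)
  | 0 => G
  | t + 1 => mycielski (iterMycielski G t)

instance iterMycVertFintype (V : Type) [Fintype V] : (t : ℕ) → Fintype (IterMycVert V t)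
  | 0 => inferInstanceAs (Fintype V)
  | t + 1 => letI := iterMycVertFintype V t
             inferInstanceAs (Fintype (MycVert (IterMycVert V t)))

/-- `f` is an `L(2,1)`-labeling of `G`. -/
def IsL21Labeling {V : Type} (G : SimpleGraph V) (f : V → ℕ) : Prop :=
  (∀ x y, G.Adj x y → 2 ≤ ((f x : ℤ) - (f y : ℤ)).natAbs) ∧
  (∀ x y, G.dist x y = 2 → f x ≠ f y)

/-- The `L(2,1)`-labeling number `λ(G)`: the least `k` such that `G` has an
`L(2,1)`-labeling with labels in `{0, …, k}`. -/
noncomputable def lambdaNumber {V : Type} (G : SimpleGraph V) : ℕ :=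
  sInf {k | ∃ f : V → ℕ, IsL21Labeling G f ∧ ∀ v, f v ≤ k}

/-! A walk of `M(G)` through the root `u` has length at least `d(u, x) + d(u, y)`. A walk
avoiding `u` becomes a walk of `G` of the same length once primes are forgotten, since every edge
of `M(G)` not at `u` lies over an edge of `G`. Both bounds are attained (for `v_a, v'_b` only when
`a ≠ b`), so `d(x, y) = min (d(u, x) + d(u, y)) (d_G(a, b))`; all other distances are `1`, or `2`
through a common neighbour. -/

namespace SimpleGraph

lemma Hom.edist_le {V W : Type*} {G : SimpleGraph V} {H : SimpleGraph W} (f : G →g H)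
    (u v : V) : H.edist (f u) (f v) ≤ G.edist u v :=
  le_iInf fun p => (SimpleGraph.edist_le (p.map f)).trans_eq (by rw [Walk.length_map])

lemma Walk.edist_add_edist_le_length {V : Type*} {G : SimpleGraph V} {x y z : V}
    (p : G.Walk x y) (hz : z ∈ p.support) :
    G.edist x z + G.edist z y ≤ p.length := by
  classical
  rw [← p.take_spec hz, Walk.length_append, Nat.cast_add]
  exact add_le_add (edist_le _) (edist_le _)

end SimpleGraph

section Mycielski

variable {V : Type} {G : SimpleGraph V}

@[simp]
lemma mycielski_adj_inl_inl {a b : V} :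
    (mycielski G).Adj (Sum.inl a) (Sum.inl b) ↔ G.Adj a b := Iff.rfl

@[simp]
lemma mycielski_adj_inl_inr {a b : V} :
    (mycielski G).Adj (Sum.inl a) (Sum.inr (Sum.inl b)) ↔ G.Adj a b := Iff.rfl

@[simp]
lemma mycielski_adj_inr_inl {a b : V} :
    (mycielski G).Adj (Sum.inr (Sum.inl a)) (Sum.inl b) ↔ G.Adj a b := Iff.rfl

@[simp]
lemma mycielski_not_adj_inr_inr {a b : V} :
    ¬ (mycielski G).Adj (Sum.inr (Sum.inl a)) (Sum.inr (Sum.inl b)) := id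

@[simp]
lemma mycielski_not_adj_root_inl {a : V} :
    ¬ (mycielski G).Adj (Sum.inr (Sum.inr ())) (Sum.inl a) := id

@[simp]
lemma mycielski_adj_root_inr {a : V} :
    (mycielski G).Adj (Sum.inr (Sum.inr ())) (Sum.inr (Sum.inl a)) := trivial

@[simp]
lemma mycielski_adj_inr_root {a : V} :
    (mycielski G).Adj (Sum.inr (Sum.inl a)) (Sum.inr (Sum.inr ())) := trivial

variable (G) in
def mycielskiInl : G →g mycielski G where
  toFun := Sum.inl
  map_rel' h := h

def mycBase : MycVert V → Option V
  | Sum.inl a => some a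
  | Sum.inr (Sum.inl a) => some a
  | Sum.inr (Sum.inr _) => none

lemma mycielski_adj_of_mycBase {x y : MycVert V} {a b : V} (h : (mycielski G).Adj x y)
    (hx : mycBase x = some a) (hy : mycBase y = some b) : G.Adj a b := by
  rcases x with a' | a' | _ <;> rcases y with b' | b' | _ <;>
    simp only [mycBase, reduceCtorEq, Option.some.injEq] at hx hy <;> subst hx hy <;>
    first | exact h | exact h.elim

lemma edist_le_length_of_root_notMem_support {x y : MycVert V}
    (p : (mycielski G).Walk x y) (hp : Sum.inr (Sum.inr ()) ∉ p.support) {a b : V}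
    (hx : mycBase x = some a) (hy : mycBase y = some b) :
    G.edist a b ≤ p.length := by
  induction p generalizing a with
  | nil => simp_all
  | @cons x z y h p ih =>
    simp only [Walk.support_cons, List.mem_cons, not_or] at hp
    obtain ⟨c, hc⟩ : ∃ c, mycBase z = some c := by
      rcases z with c | c | ⟨⟩
      exacts [⟨c, rfl⟩, ⟨c, rfl⟩, absurd p.start_mem_support hp.2]
    calc G.edist a b ≤ G.edist a c + G.edist c b := G.edist_triangle
      _ ≤ 1 + p.length :=
        add_le_add (edist_eq_one_iff_adj.2 (mycielski_adj_of_mycBase h hx hc)).le (ih hp.2 hc hy)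
      _ = (p.cons h).length := by rw [Walk.length_cons, Nat.cast_add, Nat.cast_one, add_comm]

lemma min_le_mycielski_edist {x y : MycVert V} {a b : V}
    (hx : mycBase x = some a) (hy : mycBase y = some b) :
    min ((mycielski G).edist (Sum.inr (Sum.inr ())) x +
      (mycielski G).edist (Sum.inr (Sum.inr ())) y) (G.edist a b) ≤ (mycielski G).edist x y := by
  refine le_iInf fun p => ?_
  by_cases hroot : Sum.inr (Sum.inr ()) ∈ p.support
  · rw [SimpleGraph.edist_comm (u := Sum.inr (Sum.inr ()))]
    exact (min_le_left _ _).trans (p.edist_add_edist_le_length hroot)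
  · exact (min_le_right _ _).trans (edist_le_length_of_root_notMem_support p hroot hx hy)

lemma mycielski_edist_inr_inl_le {a b : V} (hab : a ≠ b) :
    (mycielski G).edist (Sum.inr (Sum.inl a)) (Sum.inl b) ≤ G.edist a b := by
  obtain htop | hfin := eq_or_ne (G.edist a b) ⊤
  · exact htop ▸ le_top
  obtain ⟨p, hp⟩ := exists_walk_of_edist_ne_top hfin
  cases p with
  | nil => exact absurd rfl hab
  | cons h q =>
    calc (mycielski G).edist _ _
        ≤ (Walk.cons (mycielski_adj_inr_inl.2 h) (q.map (mycielskiInl G))).length := edist_le _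
      _ = G.edist a b := hp ▸ congrArg (fun n : ℕ => ((n + 1 : ℕ) : ℕ∞)) (q.length_map _)

lemma mycielski_edist_inl_inl {a b : V} :
    (mycielski G).edist (Sum.inl a) (Sum.inl b) =
      min ((mycielski G).edist (Sum.inr (Sum.inr ())) (Sum.inl a) +
        (mycielski G).edist (Sum.inr (Sum.inr ())) (Sum.inl b)) (G.edist a b) := by
  refine le_antisymm (le_min ?_ ((mycielskiInl G).edist_le a b)) (min_le_mycielski_edist rfl rfl)
  rw [SimpleGraph.edist_comm (v := Sum.inl a)]
  exact SimpleGraph.edist_triangle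

lemma mycielski_edist_inl_inr {a b : V} (hab : a ≠ b) :
    (mycielski G).edist (Sum.inl a) (Sum.inr (Sum.inl b)) =
      min ((mycielski G).edist (Sum.inr (Sum.inr ())) (Sum.inl a) +
        (mycielski G).edist (Sum.inr (Sum.inr ())) (Sum.inr (Sum.inl b))) (G.edist a b) := by
  refine le_antisymm (le_min ?_ ?_) (min_le_mycielski_edist rfl rfl)
  · rw [SimpleGraph.edist_comm (v := Sum.inl a)]
    exact SimpleGraph.edist_triangle
  · rw [SimpleGraph.edist_comm (u := Sum.inl a), G.edist_comm]
    exact mycielski_edist_inr_inl_le hab.symm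

lemma mycielski_edist_root_inr (a : V) :
    (mycielski G).edist (Sum.inr (Sum.inr ())) (Sum.inr (Sum.inl a)) = 1 :=
  edist_eq_one_iff_adj.2 trivial

lemma mycielski_edist_root_inl {a c : V} (h : G.Adj a c) :
    (mycielski G).edist (Sum.inr (Sum.inr ())) (Sum.inl a) = 2 :=
  edist_eq_two_iff.2
    ⟨by simp, by simp, Sum.inr (Sum.inl c), by simpa [mem_commonNeighbors] using h⟩

lemma mycielski_edist_inr_inr {a b : V} (hab : a ≠ b) :
    (mycielski G).edist (Sum.inr (Sum.inl a)) (Sum.inr (Sum.inl b)) = 2 :=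
  edist_eq_two_iff.2
    ⟨by simpa using hab, by simp, Sum.inr (Sum.inr ()), by simp [mem_commonNeighbors]⟩

lemma mycielski_edist_inl_inr_self {a c : V} (h : G.Adj a c) :
    (mycielski G).edist (Sum.inl a) (Sum.inr (Sum.inl a)) = 2 :=
  edist_eq_two_iff.2 ⟨by simp, by simp, Sum.inl c, by simpa [mem_commonNeighbors] using h⟩

end Mycielski

/-- Distances in the Mycielski graph `M(G)` for non-isolated vertices `v_i, v_j` of `G`:
`d(u, v'_i) = 1`, `d(u, v_i) = 2`, `d(v'_i, v'_j) = 2` for `i ≠ j`, `d(v_i, v'_i) = 2`,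
`d(v_i, v'_j) = min 3 (d_G(v_i, v_j))` for `i ≠ j`, and `d(v_i, v_j) = min 4 (d_G(v_i, v_j))`. -/
theorem mycielski_edist {V : Type} (G : SimpleGraph V) (i j : V)
    (hi : ∃ w, G.Adj i w) (hj : ∃ w, G.Adj j w) :
    (mycielski G).edist (Sum.inr (Sum.inr ())) (Sum.inr (Sum.inl i)) = 1 ∧
    (mycielski G).edist (Sum.inr (Sum.inr ())) (Sum.inl i) = 2 ∧
    (i ≠ j → (mycielski G).edist (Sum.inr (Sum.inl i)) (Sum.inr (Sum.inl j)) = 2) ∧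
    (mycielski G).edist (Sum.inl i) (Sum.inr (Sum.inl i)) = 2 ∧
    (i ≠ j → (mycielski G).edist (Sum.inl i) (Sum.inr (Sum.inl j)) = min 3 (G.edist i j)) ∧
    (mycielski G).edist (Sum.inl i) (Sum.inl j) = min 4 (G.edist i j) := by
  obtain ⟨c, hc⟩ := hi
  obtain ⟨d, hd⟩ := hj
  have hroot_i := mycielski_edist_root_inl hc
  refine ⟨mycielski_edist_root_inr i, hroot_i, mycielski_edist_inr_inr,
    mycielski_edist_inl_inr_self hc, fun hij => ?_, ?_⟩
  · rw [mycielski_edist_inl_inr hij, hroot_i, mycielski_edist_root_inr]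
    norm_num
  · rw [mycielski_edist_inl_inl, hroot_i, mycielski_edist_root_inl hd]
    norm_num
end

section
/- For every t ≥ 2 and every n ≥ 2, the L(2,1)-labeling number of the t-th iterated Mycielski of the complete graph K_n equals 2^t(n+1) - 2, i.e., one less than its number of vertices. -/
open SimpleGraph

/-! A graph of diameter 2 needs pairwise distinct labels, so its `λ` is at least `|V| - 1`.
Conversely, numbering the vertices `0, 1, …, |V| - 1` along a Hamiltonian path of the complement
is an L(2,1)-labeling. `M^t(K_n)` has diameter 2 because the Mycielski construction preserves
"no isolated vertex, and any two non-adjacent vertices have a common neighbour". For the paths: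
`M(M(G))` has one for every `G`, and a path for `G` yields one for `M(G)` by starting at the
root, running through `G` along the path and returning through the copies in reverse order. -/

namespace SimpleGraph

variable {V : Type} {G : SimpleGraph V}

lemma mycielski_exists_adj [Nonempty V] (hdeg : ∀ x, ∃ y, G.Adj x y) (x : MycVert V) :
    ∃ y, (mycielski G).Adj x y := by
  rcases x with a | a | _
  · obtain ⟨b, hab⟩ := hdeg a
    exact ⟨Sum.inl b, hab⟩
  · exact ⟨Sum.inr (Sum.inr ()), trivial⟩
  · exact ⟨Sum.inr (Sum.inl (Classical.arbitrary V)), trivial⟩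

lemma mycielski_commonNeighbors_nonempty (hdeg : ∀ x, ∃ y, G.Adj x y)
    (hcommon : ∀ x y, x ≠ y → ¬G.Adj x y → (G.commonNeighbors x y).Nonempty)
    (x y : MycVert V) (hne : x ≠ y) (hxy : ¬(mycielski G).Adj x y) :
    ((mycielski G).commonNeighbors x y).Nonempty := by
  rcases x with a | a | _ <;> rcases y with b | b | _
  · obtain ⟨c, hac, hbc⟩ := hcommon a b (fun h => hne (congrArg _ h)) hxy
    exact ⟨Sum.inl c, hac, hbc⟩
  · obtain rfl | hab := eq_or_ne a b
    · obtain ⟨c, hac⟩ := hdeg a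
      exact ⟨Sum.inl c, hac, hac⟩
    · obtain ⟨c, hac, hbc⟩ := hcommon a b hab hxy
      exact ⟨Sum.inl c, hac, hbc⟩
  · obtain ⟨c, hac⟩ := hdeg a
    exact ⟨Sum.inr (Sum.inl c), hac, trivial⟩
  · obtain rfl | hab := eq_or_ne a b
    · obtain ⟨c, hac⟩ := hdeg a
      exact ⟨Sum.inl c, hac, hac⟩
    · obtain ⟨c, hac, hbc⟩ := hcommon a b hab hxy
      exact ⟨Sum.inl c, hac, hbc⟩
  · exact ⟨Sum.inr (Sum.inr ()), trivial, trivial⟩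
  · exact absurd trivial hxy
  · obtain ⟨c, hbc⟩ := hdeg b
    exact ⟨Sum.inr (Sum.inl c), trivial, hbc⟩
  · exact absurd trivial hxy
  · exact absurd rfl hne

instance nonempty_iterMycVert [Nonempty V] : (t : ℕ) → Nonempty (IterMycVert V t)
  | 0 => inferInstanceAs (Nonempty V)
  | _ + 1 => ⟨Sum.inr (Sum.inr ())⟩

lemma iterMycielski_exists_adj [Nonempty V] (hdeg : ∀ x, ∃ y, G.Adj x y) (t : ℕ) :
    ∀ x, ∃ y, (iterMycielski G t).Adj x y := by
  induction t with
  | zero => exact hdeg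
  | succ t ih => exact mycielski_exists_adj ih

lemma iterMycielski_commonNeighbors_nonempty [Nonempty V] (hdeg : ∀ x, ∃ y, G.Adj x y)
    (hcommon : ∀ x y, x ≠ y → ¬G.Adj x y → (G.commonNeighbors x y).Nonempty) (t : ℕ) :
    ∀ x y, x ≠ y → ¬(iterMycielski G t).Adj x y →
      ((iterMycielski G t).commonNeighbors x y).Nonempty := by
  induction t with
  | zero => exact hcommon
  | succ t ih => exact mycielski_commonNeighbors_nonempty (iterMycielski_exists_adj hdeg t) ih

lemma card_mycVert [Fintype V] : Fintype.card (MycVert V) = 2 * Fintype.card V + 1 := by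
  simp only [Fintype.card_sum, Fintype.card_unit]
  ring

lemma card_iterMycVert_add_one [Fintype V] (t : ℕ) :
    Fintype.card (IterMycVert V t) + 1 = 2 ^ t * (Fintype.card V + 1) := by
  induction t with
  | zero => simp only [pow_zero, one_mul]; rfl
  | succ t ih =>
    rw [show Fintype.card (IterMycVert V (t + 1)) = Fintype.card (MycVert (IterMycVert V t))
      from rfl, card_mycVert, pow_succ]
    linarith

/-- For `m = card V`, `g` lists the vertices along a Hamiltonian path of the complement of `G`. -/
structure IsComplPathNumbering (G : SimpleGraph V) (m : ℕ) (g : V → ℕ) : Prop where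
  injective : Function.Injective g
  lt : ∀ v, g v < m
  not_adj_of_succ_eq : ∀ ⦃a b⦄, g a + 1 = g b → ¬G.Adj a b

variable {m : ℕ} {g : V → ℕ}

lemma IsComplPathNumbering.isL21Labeling (hg : G.IsComplPathNumbering m g) :
    IsL21Labeling G g := by
  refine ⟨fun x y hxy => ?_, fun x y hd hxy => ?_⟩
  · have h₀ : g x ≠ g y := fun h => G.ne_of_adj hxy (hg.injective h)
    have h₁ : g x + 1 ≠ g y := fun h => hg.not_adj_of_succ_eq h hxy
    have h₂ : g y + 1 ≠ g x := fun h => hg.not_adj_of_succ_eq h hxy.symm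
    omega
  · obtain rfl := hg.injective hxy
    simp at hd

def mycielskiNumbering (m : ℕ) (g : V → ℕ) : MycVert V → ℕ
  | Sum.inl a => g a + 1
  | Sum.inr (Sum.inl a) => 2 * m - g a
  | Sum.inr (Sum.inr _) => 0

lemma IsComplPathNumbering.mycielski (hg : G.IsComplPathNumbering m g) :
    (mycielski G).IsComplPathNumbering (2 * m + 1) (mycielskiNumbering m g) := by
  have hlt := hg.lt
  refine ⟨?_, ?_, ?_⟩
  · rintro (a | a | _) (b | b | _) h <;> simp only [mycielskiNumbering] at h <;>
      grind [hg.injective.eq_iff]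
  · rintro (a | a | _) <;> simp only [mycielskiNumbering] <;> grind
  · rintro (a | a | _) (b | b | _) h hab <;> simp only [mycielskiNumbering] at h <;>
      simp only [_root_.mycielski, mycAdj] at hab <;>
      grind [hg.injective.eq_iff, hg.not_adj_of_succ_eq, SimpleGraph.irrefl]

/-- Each `v : V` contributes the block `v̂, v, v', v̂'` of four consecutive labels, where `'` is
the copy in `M(G)` and `^` the copy in `M(M(G))`; after the blocks come `ŵ, w` for the root `w`
of `M(G)`, and finally the root of `M(M(G))`. -/
def mycielskiSqNumbering (k : ℕ) (e : V → ℕ) : MycVert (MycVert V) → ℕ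
  | Sum.inl (Sum.inl v) => 4 * e v + 1
  | Sum.inl (Sum.inr (Sum.inl v)) => 4 * e v + 2
  | Sum.inl (Sum.inr (Sum.inr _)) => 4 * k + 1
  | Sum.inr (Sum.inl (Sum.inl v)) => 4 * e v
  | Sum.inr (Sum.inl (Sum.inr (Sum.inl v))) => 4 * e v + 3
  | Sum.inr (Sum.inl (Sum.inr (Sum.inr _))) => 4 * k
  | Sum.inr (Sum.inr _) => 4 * k + 2

lemma isComplPathNumbering_mycielski_mycielski {k : ℕ} {e : V → ℕ}
    (he : Function.Injective e) (hk : ∀ v, e v < k) :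
    (mycielski (mycielski G)).IsComplPathNumbering (4 * k + 3) (mycielskiSqNumbering k e) := by
  refine ⟨?_, ?_, ?_⟩
  · rintro ((a | a | _) | (a | a | _) | _) ((b | b | _) | (b | b | _) | _) h <;>
      simp only [mycielskiSqNumbering] at h <;> grind [he.eq_iff]
  · rintro ((a | a | _) | (a | a | _) | _) <;> simp only [mycielskiSqNumbering] <;> grind
  · rintro ((a | a | _) | (a | a | _) | _) ((b | b | _) | (b | b | _) | _) h hab <;>
      simp only [mycielskiSqNumbering] at h <;>
      simp only [_root_.mycielski, mycAdj] at hab <;> grind [he.eq_iff, SimpleGraph.irrefl]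

lemma exists_isComplPathNumbering_iterMycielski [Fintype V] {t : ℕ}
    (ht : 2 ≤ t) : ∃ g, (iterMycielski G t).IsComplPathNumbering
      (Fintype.card (IterMycVert V t)) g := by
  induction t, ht using Nat.le_induction with
  | base =>
    have hcard : Fintype.card (IterMycVert V 2) = 4 * Fintype.card V + 3 := by
      have := card_iterMycVert_add_one (V := V) 2
      omega
    have he : Function.Injective fun v => (Fintype.equivFin V v : ℕ) :=
      Fin.val_injective.comp (Fintype.equivFin V).injective
    exact ⟨_, hcard ▸ isComplPathNumbering_mycielski_mycielski he
      fun v => (Fintype.equivFin V v).isLt⟩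
  | succ t _ ih =>
    obtain ⟨g, hg⟩ := ih
    exact ⟨_, card_mycVert (V := IterMycVert V t) ▸ hg.mycielski⟩

end SimpleGraph

variable {V : Type} {G : SimpleGraph V}

lemma IsL21Labeling.injective
    (hcommon : ∀ x y, x ≠ y → ¬G.Adj x y → (G.commonNeighbors x y).Nonempty)
    {f : V → ℕ} (hf : IsL21Labeling G f) : Function.Injective f := by
  intro x y hxy
  by_contra hne
  by_cases hadj : G.Adj x y
  · simpa [hxy] using hf.1 x y hadj
  · have hd : G.edist x y = 2 := edist_eq_two_iff.mpr ⟨hne, hadj, hcommon x y hne hadj⟩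
    exact hf.2 x y (by rw [SimpleGraph.dist, hd]; rfl) hxy

lemma lambdaNumber_eq_card_sub_one [Fintype V]
    (hcommon : ∀ x y, x ≠ y → ¬G.Adj x y → (G.commonNeighbors x y).Nonempty)
    {g : V → ℕ} (hg : G.IsComplPathNumbering (Fintype.card V) g) :
    lambdaNumber G = Fintype.card V - 1 := by
  have hbound : ∀ v, g v ≤ Fintype.card V - 1 := fun v => by have := hg.lt v; omega
  refine le_antisymm (Nat.sInf_le ⟨g, hg.isL21Labeling, hbound⟩)
    (le_csInf ⟨_, g, hg.isL21Labeling, hbound⟩ ?_)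
  rintro k ⟨f, hf, hk⟩
  have hcard := Fintype.card_le_of_injective
    (fun v => (⟨f v, Nat.lt_succ_of_le (hk v)⟩ : Fin (k + 1)))
    fun a b h => hf.injective hcommon (congrArg Fin.val h)
  rw [Fintype.card_fin] at hcard
  omega

/-- For every `t ≥ 2` and `n ≥ 2`, `λ(M^t(K_n)) = 2^t(n+1) - 2`, one less than its number
of vertices. -/
theorem lambdaNumber_iterMycielski_completeGraph (n t : ℕ) (hn : 2 ≤ n) (ht : 2 ≤ t) :
    lambdaNumber (iterMycielski (⊤ : SimpleGraph (Fin n)) t) = 2 ^ t * (n + 1) - 2 := by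
  have : Nonempty (Fin n) := ⟨⟨0, by omega⟩⟩
  have hdeg (x : Fin n) : ∃ y, (⊤ : SimpleGraph (Fin n)).Adj x y := by
    obtain ⟨y, hy⟩ := Fintype.exists_ne_of_one_lt_card (by rw [Fintype.card_fin]; omega) x
    exact ⟨y, hy.symm⟩
  have hcommon := iterMycielski_commonNeighbors_nonempty hdeg
    (fun x y hne hxy => absurd ((top_adj x y).mpr hne) hxy) t
  obtain ⟨g, hg⟩ :=
    exists_isComplPathNumbering_iterMycielski (G := (⊤ : SimpleGraph (Fin n))) ht
  have hcard := card_iterMycVert_add_one (V := Fin n) t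
  rw [Fintype.card_fin] at hcard
  rw [lambdaNumber_eq_card_sub_one hcommon hg]
  omega
end
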